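/- The third element of the Böhm sequence differs from the third element of the Scott sequence: Y0 δ δ and B Y0 S S I are not β-convertible, where Y0 is Curry's fixed point combinator and δ = λab.b(ab). -/

import Mathlib

/-- Untyped λ-terms in de Bruijn notation. -/
inductive Lam : Type
  | var : Nat → Lam
  | app : Lam → Lam → Lam
  | lam : Lam → Lam
  deriving DecidableEq

namespace Lam

/-- Lift (shift) free variables ≥ `d` by one. -/
def lift (d : Nat) : Lam → Lam
  | var n => if n < d then var n else var (n + 1)
  | app s t => app (lift d s) (lift d t)
  | lam t => lam (lift (d + 1) t)

/-- Capture-avoiding substitution of `u` for the variable with index `k`. -/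
def subst (k : Nat) (u : Lam) : Lam → Lam
  | var n => if n = k then u else if k < n then var (n - 1) else var n
  | app s t => app (subst k u s) (subst k u t)
  | lam t => lam (subst (k + 1) (lift 0 u) t)

/-- One-step β-reduction `→β` (compatible closure of the β-rule). -/
inductive Step : Lam → Lam → Prop
  | beta (t u : Lam) : Step (app (lam t) u) (subst 0 u t)
  | appL {s s' : Lam} (t : Lam) : Step s s' → Step (app s t) (app s' t)
  | appR (s : Lam) {t t' : Lam} : Step t t' → Step (app s t) (app s t')
  | lam {t t' : Lam} : Step t t' → Step (lam t) (lam t')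

/-- Many-step β-reduction `↠β`. -/
def Red : Lam → Lam → Prop := Relation.ReflTransGen Step

/-- β-convertibility `=β`. -/
def Conv : Lam → Lam → Prop := Relation.EqvGen Step

/-- `Y` is a fixed point combinator: `Y x =β x (Y x)` for a fresh variable `x`. -/
def isFPC (Y : Lam) : Prop :=
  Conv (app (lift 0 Y) (var 0)) (app (var 0) (app (lift 0 Y) (var 0)))

/-- `M P^n`: `M` applied to `n` copies of `P`. -/
def appIter (M P : Lam) : Nat → Lam
  | 0 => M
  | n + 1 => appIter (app M P) P n

/-- `I = λx.x` -/
def K_I : Lam := lam (var 0)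

/-- `S = λxyz.xz(yz)` -/
def K_S : Lam := lam (lam (lam (app (app (var 2) (var 0)) (app (var 1) (var 0)))))

/-- `B = λxyz.x(yz)` -/
def K_B : Lam := lam (lam (lam (app (var 2) (app (var 1) (var 0)))))

/-- `δ = λab.b(ab)` -/
def K_delta : Lam := lam (lam (app (var 0) (app (var 1) (var 0))))

/-- `ω_f = λx.f(xx)` (with `f` the variable bound just outside). -/
def K_omega : Lam := lam (app (var 1) (app (var 0) (var 0)))

/-- Curry's fpc `Y0 = λf.ω_f ω_f`. -/
def Y0 : Lam := lam (app K_omega K_omega)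

/-- `η = λxf.f(xxf)` -/
def K_eta : Lam := lam (lam (app (var 0) (app (app (var 1) (var 1)) (var 0))))

/-- Turing's fpc `Y1 = ηη`. -/
def Y1 : Lam := app K_eta K_eta

/-- One head reduction step: contraction of the head redex. -/
inductive Head : Lam → Lam → Prop
  | beta (t u : Lam) : Head (app (lam t) u) (subst 0 u t)
  | app {s s' : Lam} (t : Lam) : (∀ u, s ≠ lam u) → Head s s' → Head (app s t) (app s' t)
  | lam {t t' : Lam} : Head t t' → Head (lam t) (lam t')

/-- Exactly `k` head reduction steps. -/
def HeadN : Nat → Lam → Lam → Prop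
  | 0, s, t => s = t
  | k + 1, s, t => ∃ u, Head s u ∧ HeadN k u t

/-- Exactly `k` β-reduction steps. -/
def StepN : Nat → Lam → Lam → Prop
  | 0, s, t => s = t
  | k + 1, s, t => ∃ u, Step s u ∧ StepN k u t

/-!
By Church–Rosser, convertible terms have a common reduct. Two grammars closed under
β-reduction separate the two sides: `Y2Shape` contains a reduct of `Y0 δ δ`, `U2Shape` one of
`B Y0 S S I`, and the identity `λx.x` occurs in every term of `U2Shape` whose atom is `I` but
in no term of `Y2Shape`.

`Y0 δ δ` reduces to `ω_δ ω_δ δ`, and the terms of `Y2Shape` are built from `ω_δ`, its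
reduct `η`, `δ` and variables only. On the other side the engine `Y0 (S S)` hands its argument
on to a fresh copy of itself, `Y0 (S S) I =β S I (Y0 (S S) I) → λz. I z (Y0 (S S) I z)`, so
the `I` is copied before it is ever consumed; `U2Shape` tracks where those copies sit.
-/

theorem lift_lift : ∀ (t : Lam) {d e : Nat}, d ≤ e →
    lift d (lift e t) = lift (e + 1) (lift d t)
  | var n, d, e, h => by
      simp only [lift]; split_ifs <;> simp only [lift] <;> split_ifs <;> grind
  | app s t, d, e, h => by simp only [lift, lift_lift s h, lift_lift t h]
  | lam t, d, e, h => by simp only [lift, lift_lift t (Nat.succ_le_succ h)]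

theorem subst_lift : ∀ (t : Lam) {k : Nat} {u : Lam}, subst k u (lift k t) = t
  | var n, k, u => by
      simp only [lift]; split_ifs <;> simp only [subst] <;> split_ifs <;> grind
  | app s t, k, u => by simp only [lift, subst, subst_lift s, subst_lift t]
  | lam t, k, u => by simp only [lift, subst, subst_lift t]

theorem lift_subst_of_le : ∀ (t : Lam) {d k : Nat} {u : Lam}, d ≤ k →
    lift d (subst k u t) = subst (k + 1) (lift d u) (lift d t)
  | var n, d, k, u, h => by
      simp only [subst, lift]
      split_ifs <;> simp only [lift, subst] <;> split_ifs <;> grind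
  | app s t, d, k, u, h => by simp only [lift, subst, lift_subst_of_le s h, lift_subst_of_le t h]
  | lam t, d, k, u, h => by
      simp only [lift, subst, lift_subst_of_le t (Nat.succ_le_succ h), lift_lift u (Nat.zero_le d)]

theorem lift_subst_of_ge : ∀ (t : Lam) {d k : Nat} {u : Lam}, k ≤ d →
    lift d (subst k u t) = subst k (lift d u) (lift (d + 1) t)
  | var n, d, k, u, h => by
      simp only [subst, lift]
      split_ifs <;> simp only [lift, subst] <;> split_ifs <;> grind
  | app s t, d, k, u, h => by simp only [lift, subst, lift_subst_of_ge s h, lift_subst_of_ge t h]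
  | lam t, d, k, u, h => by
      simp only [lift, subst, lift_subst_of_ge t (Nat.succ_le_succ h), lift_lift u (Nat.zero_le d)]

theorem subst_subst : ∀ (t : Lam) {j k : Nat} {u v : Lam}, j ≤ k →
    subst k v (subst j u t) = subst j (subst k v u) (subst (k + 1) (lift j v) t)
  | var n, j, k, u, v, h => by
      simp only [subst]
      split_ifs <;> (try simp only [subst, subst_lift]) <;> (try split_ifs) <;> grind
  | app s t, j, k, u, v, h => by simp only [subst, subst_subst s h, subst_subst t h]
  | lam t, j, k, u, v, h => by
      simp only [subst, subst_subst t (Nat.succ_le_succ h),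
        lift_subst_of_le u (Nat.zero_le k), lift_lift v (Nat.zero_le j)]

def closedAt (m : Nat) : Lam → Bool
  | var n => n < m
  | app s t => closedAt m s && closedAt m t
  | lam t => closedAt (m + 1) t

theorem closedAt_mono : ∀ {t : Lam} {m m' : Nat}, closedAt m t → m ≤ m' → closedAt m' t
  | var n, m, m', h, hm => by simp only [closedAt, decide_eq_true_eq] at *; omega
  | app s t, m, m', h, hm => by
      simp only [closedAt, Bool.and_eq_true] at *
      exact ⟨closedAt_mono h.1 hm, closedAt_mono h.2 hm⟩
  | lam t, m, m', h, hm => by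
      simp only [closedAt] at *
      exact closedAt_mono h (by omega)

theorem lift_eq_self_of_closedAt :
    ∀ {t : Lam} {m d : Nat}, closedAt m t → m ≤ d → lift d t = t
  | var n, m, d, h, hmd => by
      simp only [closedAt, decide_eq_true_eq] at h
      simp only [lift, if_pos (by omega : n < d)]
  | app s t, m, d, h, hmd => by
      simp only [closedAt, Bool.and_eq_true] at h
      simp only [lift, lift_eq_self_of_closedAt h.1 hmd, lift_eq_self_of_closedAt h.2 hmd]
  | lam t, m, d, h, hmd => by
      simp only [closedAt] at h
      simp only [lift, lift_eq_self_of_closedAt h (Nat.succ_le_succ hmd)]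

theorem subst_eq_self_of_closedAt :
    ∀ {t : Lam} {m k : Nat} {u : Lam}, closedAt m t → m ≤ k → subst k u t = t
  | var n, m, k, u, h, hmk => by
      simp only [closedAt, decide_eq_true_eq] at h
      simp only [subst, if_neg (by omega : ¬ n = k), if_neg (by omega : ¬ k < n)]
  | app s t, m, k, u, h, hmk => by
      simp only [closedAt, Bool.and_eq_true] at h
      simp only [subst, subst_eq_self_of_closedAt h.1 hmk, subst_eq_self_of_closedAt h.2 hmk]
  | lam t, m, k, u, h, hmk => by
      simp only [closedAt] at h
      simp only [subst, subst_eq_self_of_closedAt h (Nat.succ_le_succ hmk)]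

theorem lift_eq_self_of_closed {t : Lam} (h : closedAt 0 t) (d : Nat) : lift d t = t :=
  lift_eq_self_of_closedAt h (Nat.zero_le d)

theorem subst_eq_self_of_closed {t : Lam} (h : closedAt 0 t) (k : Nat) (u : Lam) :
    subst k u t = t :=
  subst_eq_self_of_closedAt h (Nat.zero_le k)

@[simp] theorem lift_K_S (d : Nat) : lift d K_S = K_S := lift_eq_self_of_closed (by decide) d

@[simp] theorem subst_K_S (k : Nat) (u : Lam) : subst k u K_S = K_S :=
  subst_eq_self_of_closed (by decide) k u

@[simp] theorem lift_K_delta (d : Nat) : lift d K_delta = K_delta :=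
  lift_eq_self_of_closed (by decide) d

@[simp] theorem subst_K_delta (k : Nat) (u : Lam) : subst k u K_delta = K_delta :=
  subst_eq_self_of_closed (by decide) k u

/-! ### Church–Rosser, via parallel reduction -/

inductive Par : Lam → Lam → Prop
  | var (n : Nat) : Par (var n) (var n)
  | app {s s' t t' : Lam} : Par s s' → Par t t' → Par (app s t) (app s' t')
  | lam {t t' : Lam} : Par t t' → Par (lam t) (lam t')
  | beta {b b' u u' : Lam} : Par b b' → Par u u' → Par (app (lam b) u) (subst 0 u' b')

theorem Par.refl (t : Lam) : Par t t := by
  induction t with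
  | var n => exact .var n
  | app s t ihs iht => exact .app ihs iht
  | lam t ih => exact .lam ih

theorem Step.par {t u : Lam} (h : Step t u) : Par t u := by
  induction h with
  | beta t u => exact .beta (.refl t) (.refl u)
  | appL t _ ih => exact .app ih (.refl t)
  | appR s _ ih => exact .app (.refl s) ih
  | lam _ ih => exact .lam ih

theorem Red.app_left {s s' : Lam} (t : Lam) (h : Red s s') : Red (app s t) (app s' t) :=
  Relation.ReflTransGen.lift (app · t) (fun _ _ => Step.appL t) _ _ h

theorem Red.app_right (s : Lam) {t t' : Lam} (h : Red t t') : Red (app s t) (app s t') :=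
  Relation.ReflTransGen.lift (app s) (fun _ _ => Step.appR s) _ _ h

theorem Red.lam {t t' : Lam} (h : Red t t') : Red (lam t) (lam t') :=
  Relation.ReflTransGen.lift Lam.lam (fun _ _ => Step.lam) _ _ h

theorem Par.red {t u : Lam} (h : Par t u) : Red t u := by
  induction h with
  | var n => exact .refl
  | app _ _ ih₁ ih₂ => exact (ih₁.app_left _).trans (ih₂.app_right _)
  | lam _ ih => exact ih.lam
  | @beta b b' u u' _ _ ih₁ ih₂ =>
      exact (ih₁.lam.app_left _ |>.trans (ih₂.app_right _)).tail (.beta b' u')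

theorem Par.lift {t u : Lam} (h : Par t u) (d : Nat) : Par (lift d t) (lift d u) := by
  induction h generalizing d with
  | var n => simp only [Lam.lift]; split <;> exact .refl _
  | app _ _ ih₁ ih₂ => exact .app (ih₁ d) (ih₂ d)
  | lam _ ih => exact .lam (ih (d + 1))
  | @beta b b' u u' _ _ ih₁ ih₂ =>
      rw [lift_subst_of_ge b' (Nat.zero_le d)]
      exact .beta (ih₁ (d + 1)) (ih₂ d)

theorem Par.subst {t t' u u' : Lam} (ht : Par t t') (hu : Par u u') (k : Nat) :
    Par (subst k u t) (subst k u' t') := by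
  induction ht generalizing k u u' with
  | var n =>
      simp only [Lam.subst]
      split
      · exact hu
      · split <;> exact .refl _
  | app _ _ ih₁ ih₂ => exact .app (ih₁ hu k) (ih₂ hu k)
  | lam _ ih => exact .lam (ih (hu.lift 0) (k + 1))
  | @beta b b' c c' _ _ ih₁ ih₂ =>
      rw [subst_subst b' (Nat.zero_le k)]
      exact .beta (ih₁ (hu.lift 0) (k + 1)) (ih₂ hu k)

def develop : Lam → Lam
  | var n => var n
  | lam t => lam (develop t)
  | app (lam b) u => subst 0 (develop u) (develop b)
  | app (var n) u => app (var n) (develop u)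
  | app (app s t) u => app (develop (app s t)) (develop u)

theorem Par.par_develop {t u : Lam} (h : Par t u) : Par u (develop t) := by
  induction h with
  | var n => exact .var n
  | @app s s' t t' hs ht ih₁ ih₂ =>
      cases s with
      | var n => cases hs; exact .app ih₁ ih₂
      | app a b => exact .app ih₁ ih₂
      | lam b =>
          cases hs with
          | lam hb => cases ih₁ with
            | lam hb' => exact .beta hb' ih₂
  | lam _ ih => exact .lam ih
  | beta _ _ ih₁ ih₂ => exact ih₁.subst ih₂ 0

theorem Conv.exists_common_reduct {a b : Lam} (h : Conv a b) : ∃ c, Red a c ∧ Red b c := by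
  have hjoin : Equivalence (Relation.Join (Relation.ReflTransGen Par)) :=
    Relation.equivalence_join_reflTransGen fun t _ _ htu htv =>
      ⟨develop t, .single htu.par_develop, .single htv.par_develop⟩
  obtain ⟨c, hac, hbc⟩ := hjoin.eqvGen_iff.1 <|
    Relation.EqvGen.mono (fun _ u h => ⟨u, .single h.par, .refl⟩) _ _ h
  have hred : Relation.ReflTransGen Par ≤ Red :=
    Relation.reflTransGen_closed fun _ _ => Par.red
  exact ⟨c, hred _ _ hac, hred _ _ hbc⟩

theorem Red.conv {t u : Lam} (h : Red t u) : Conv t u :=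
  Relation.EqvGen.reflTransGen_le_eqvGen _ _ _ h

theorem Red.preserves {P : Lam → Prop} (hP : ∀ {t u}, P t → Step t u → P u) {t u : Lam}
    (h : Red t u) (ht : P t) : P u := by
  induction h with
  | refl => exact ht
  | tail _ hstep ih => exact hP ih hstep

/-! ### One-step reducts -/

def contractions : Lam → Lam → List Lam
  | lam b, u => [subst 0 u b]
  | _, _ => []

def reducts : Lam → List Lam
  | var _ => []
  | app s t => contractions s t ++ (reducts s).map (app · t) ++ (reducts t).map (app s)
  | lam t => (reducts t).map Lam.lam

theorem Step.mem_reducts {t u : Lam} (h : Step t u) : u ∈ reducts t := by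
  induction h with
  | beta => simp [reducts, contractions]
  | appL _ _ ih => simp [reducts, ih]
  | appR _ _ ih => simp [reducts, ih]
  | lam _ ih => simp [reducts, ih]

theorem Step.reducts_ne_nil {t u : Lam} (h : Step t u) : reducts t ≠ [] :=
  List.ne_nil_of_mem h.mem_reducts

def containsI : Lam → Bool
  | var _ => false
  | app s t => containsI s || containsI t
  | lam t => t == var 0 || containsI t

def IsReductClosed (L : List Lam) : Prop := ∀ t ∈ L, ∀ u ∈ reducts t, u ∈ L

theorem IsReductClosed.mem_of_step {L : List Lam} (hL : IsReductClosed L) {t u : Lam}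
    (ht : t ∈ L) (h : Step t u) : u ∈ L :=
  hL t ht u h.mem_reducts

/-! ### The Böhm side: reducts of `Y0 δ δ` -/

def omegaDelta : Lam := lam (app K_delta (app (var 0) (var 0)))

def omegaDeltaReducts : List Lam := [omegaDelta, K_eta]

theorem omegaDeltaReducts_isReductClosed : IsReductClosed omegaDeltaReducts := by
  unfold IsReductClosed; decide

theorem closedAt_of_mem_omegaDeltaReducts : ∀ o ∈ omegaDeltaReducts, closedAt 0 o := by
  decide

/-- Index `1` marks terms living under one binder, whose variable `0` may occur free. -/
inductive Y2Shape : Nat → Lam → Prop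
  | selfApp {o o' : Lam} :
      o ∈ omegaDeltaReducts → o' ∈ omegaDeltaReducts → Y2Shape 0 (app o o')
  | delta_app {t : Lam} : Y2Shape 0 t → Y2Shape 0 (app K_delta t)
  | app_delta {s : Lam} : Y2Shape 0 s → Y2Shape 0 (app s K_delta)
  | abs {b : Lam} : Y2Shape 1 b → Y2Shape 0 (lam b)
  | app_var {s : Lam} : Y2Shape 0 s → Y2Shape 1 (app s (var 0))
  | var_app {t : Lam} : Y2Shape 1 t → Y2Shape 1 (app (var 0) t)

theorem Y2Shape.closedAt {m : Nat} {t : Lam} (h : Y2Shape m t) : closedAt m t := by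
  induction h with
  | selfApp ho ho' =>
      simp [Lam.closedAt, closedAt_of_mem_omegaDeltaReducts _ ho,
        closedAt_of_mem_omegaDeltaReducts _ ho']
  | app_var _ ih => simp [Lam.closedAt, closedAt_mono ih zero_le_one]
  | _ => simp_all [Lam.closedAt, K_delta]

theorem Y2Shape.containsI_eq_false {m : Nat} {t : Lam} (h : Y2Shape m t) : containsI t = false := by
  have hI : ∀ o ∈ omegaDeltaReducts, containsI o = false := by decide
  induction h with
  | selfApp ho ho' => simp [Lam.containsI, hI _ ho, hI _ ho']
  | abs hb ih => cases hb <;> simp_all [Lam.containsI]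
  | _ => simp_all [Lam.containsI, K_delta]

theorem Y2Shape.subst_zero :
    ∀ {t : Lam}, Y2Shape 1 t → Y2Shape 0 (subst 0 K_delta t) ∧ Y2Shape 1 (subst 0 (var 0) t)
  | _, .app_var (s := s) hs => by
      have hδ : subst 0 K_delta s = s := subst_eq_self_of_closedAt hs.closedAt le_rfl
      have hv : subst 0 (var 0) s = s := subst_eq_self_of_closedAt hs.closedAt le_rfl
      exact ⟨by simpa [Lam.subst, hδ] using hs.app_delta,
        by simpa [Lam.subst, hv] using hs.app_var⟩
  | _, .var_app ht =>
      ⟨(Y2Shape.subst_zero ht).1.delta_app, (Y2Shape.subst_zero ht).2.var_app⟩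

theorem Y2Shape.selfApp_beta {b o' : Lam} (ho : lam b ∈ omegaDeltaReducts)
    (ho' : o' ∈ omegaDeltaReducts) : Y2Shape 0 (subst 0 o' b) := by
  have hself := Y2Shape.selfApp ho' ho'
  have hlift : lift 0 o' = o' := lift_eq_self_of_closed (closedAt_of_mem_omegaDeltaReducts _ ho') 0
  simp only [omegaDeltaReducts, List.mem_cons, List.not_mem_nil, or_false] at ho
  rcases ho with hb | hb <;> cases hb
  · simpa [Lam.subst] using hself.delta_app
  · simpa [Lam.subst, hlift] using hself.app_var.var_app.abs

theorem Y2Shape.beta {m : Nat} {b t : Lam} (h : Y2Shape m (app (lam b) t)) :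
    Y2Shape m (subst 0 t b) := by
  cases h with
  | selfApp ho ho' => exact selfApp_beta ho ho'
  | delta_app ht =>
      simpa [Lam.subst, lift_eq_self_of_closedAt ht.closedAt le_rfl] using ht.app_var.var_app.abs
  | app_delta hs => cases hs with
    | abs hb => exact hb.subst_zero.1
  | app_var hs => cases hs with
    | abs hb => exact hb.subst_zero.2

theorem Y2Shape.step {m : Nat} {t u : Lam} (h : Y2Shape m t) (hs : Step t u) : Y2Shape m u := by
  induction hs generalizing m with
  | beta => exact h.beta
  | appL _ hs ih => cases h with
    | selfApp ho ho' => exact .selfApp (omegaDeltaReducts_isReductClosed.mem_of_step ho hs) ho'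
    | delta_app _ => exact absurd hs.reducts_ne_nil (by decide)
    | app_delta hs' => exact (ih hs').app_delta
    | app_var hs' => exact (ih hs').app_var
    | var_app _ => cases hs
  | appR _ ht ih => cases h with
    | selfApp ho ho' => exact .selfApp ho (omegaDeltaReducts_isReductClosed.mem_of_step ho' ht)
    | delta_app ht' => exact (ih ht').delta_app
    | app_delta _ => exact absurd ht.reducts_ne_nil (by decide)
    | app_var _ => cases ht
    | var_app ht' => exact (ih ht').var_app
  | lam _ ih => cases h with
    | abs hb => exact (ih hb).abs

/-! ### The Scott side: reducts of `B Y0 S S I` -/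

/-- The contractum of `S a`. -/
def S₁ (a : Lam) : Lam :=
  lam (lam (app (app (lift 0 (lift 0 a)) (var 0)) (app (var 1) (var 0))))

theorem lift_S₁ (a : Lam) (d : Nat) : lift d (S₁ a) = S₁ (lift d a) := by
  simp only [S₁, lift, lift_lift (lift 0 a) (Nat.zero_le (d + 1)), lift_lift a (Nat.zero_le d)]
  rfl

theorem subst_S₁ (a u : Lam) (k : Nat) : subst k u (S₁ a) = S₁ (subst k u a) := by
  simp only [S₁, subst, lift_subst_of_le a (Nat.zero_le k),
    lift_subst_of_le (lift 0 a) (Nat.zero_le (k + 1))]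
  rfl

def ssReducts : List Lam :=
  [app K_S K_S,
   lam (lam (app (app K_S (var 0)) (app (var 1) (var 0)))),
   lam (lam (app (S₁ (var 0)) (app (var 1) (var 0)))),
   lam (lam (lam (app (app (var 1) (var 0)) (app (app (var 2) (var 1)) (var 0)))))]

def omegaSS : Lam := lam (app (app K_S K_S) (app (var 0) (var 0)))

def omegaSSReducts : List Lam :=
  ssReducts.map (fun g => lam (app g (app (var 0) (var 0)))) ++
  [lam (lam (app (app K_S (var 0)) (app (app (var 1) (var 1)) (var 0)))),
   lam (lam (app (S₁ (var 0)) (app (app (var 1) (var 1)) (var 0)))),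
   lam (lam (lam (app (app (var 1) (var 0)) (app (app (app (var 2) (var 2)) (var 1)) (var 0)))))]

theorem ssReducts_isReductClosed : IsReductClosed ssReducts := by
  unfold IsReductClosed; decide

theorem omegaSSReducts_isReductClosed : IsReductClosed omegaSSReducts := by
  unfold IsReductClosed; decide

theorem closedAt_of_mem_ssReducts : ∀ g ∈ ssReducts, closedAt 0 g := by decide

theorem closedAt_of_mem_omegaSSReducts : ∀ o ∈ omegaSSReducts, closedAt 0 o := by decide

def IsAtom (a : Lam) : Prop := a = K_I ∨ ∃ n, a = var n

theorem isAtom_var (n : Nat) : IsAtom (var n) := .inr ⟨n, rfl⟩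

theorem IsAtom.lift {a : Lam} (h : IsAtom a) (d : Nat) : IsAtom (lift d a) := by
  rcases h with rfl | ⟨n, rfl⟩
  · exact .inl rfl
  · simp only [Lam.lift]; split <;> exact isAtom_var _

theorem IsAtom.subst {a b : Lam} (ha : IsAtom a) (hb : IsAtom b) (k : Nat) :
    IsAtom (subst k b a) := by
  rcases ha with rfl | ⟨n, rfl⟩
  · exact .inl rfl
  · simp only [Lam.subst]; split
    · exact hb
    · split <;> exact isAtom_var _

theorem IsAtom.not_step {a u : Lam} (h : IsAtom a) : ¬Step a u := by
  rcases h with rfl | ⟨n, rfl⟩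
  · exact fun hs => absurd hs.reducts_ne_nil (by decide)
  · nofun

theorem IsAtom.eq_of_step_app_var {a u : Lam} (ha : IsAtom a) (h : Step (app a (var 0)) u) :
    u = var 0 := by
  rcases ha with rfl | ⟨n, rfl⟩
  · simpa [K_I, reducts, contractions, Lam.subst] using h.mem_reducts
  · cases h with
    | appL _ h' => cases h'
    | appR _ h' => cases h'

theorem IsAtom.eq_of_step_S_app {a u : Lam} (ha : IsAtom a) (h : Step (app K_S a) u) :
    u = S₁ a := by
  cases h with
  | beta => rfl
  | appL _ h' => exact absurd h'.reducts_ne_nil (by decide)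
  | appR _ h' => exact absurd h' ha.not_step

theorem IsAtom.eq_of_step_S₁ {a u : Lam} (ha : IsAtom a) (h : Step (S₁ a) u) : u = K_delta := by
  rcases ha with rfl | ⟨n, rfl⟩
  · have hreducts : reducts (S₁ K_I) = [K_delta] := by decide
    simpa [hreducts] using h.mem_reducts
  · simpa [S₁, Lam.lift, reducts, contractions] using h.mem_reducts

/-- `engine`: the fixed-point engine `ω_{SS} ω_{SS}` and its unfoldings; `holds a`: the atom `a`
sits in a position that no reduction erases; `holdsUnder a`: the same, one binder deep, the
bound variable being `0`. -/
inductive U2Kind : Type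
  | engine : U2Kind
  | holds : Lam → U2Kind
  | holdsUnder : Lam → U2Kind

@[simp] def U2Kind.map (f : Lam → Lam) : U2Kind → U2Kind
  | engine => engine
  | holds a => holds (f a)
  | holdsUnder a => holdsUnder (f a)

@[simp] def U2Kind.depth : U2Kind → Nat
  | holdsUnder _ => 1
  | _ => 0

inductive U2Shape : U2Kind → Lam → Prop
  | selfApp {o o' : Lam} :
      o ∈ omegaSSReducts → o' ∈ omegaSSReducts → U2Shape .engine (app o o')
  | ss_app {g X : Lam} : g ∈ ssReducts → U2Shape .engine X → U2Shape .engine (app g X)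
  | lam_holds {b : Lam} : U2Shape (.holds (var 0)) b → U2Shape .engine (lam b)
  | engine_app {X a : Lam} : U2Shape .engine X → IsAtom a → U2Shape (.holds a) (app X a)
  | S_app {a s : Lam} : IsAtom a → U2Shape (.holds a) s → U2Shape (.holds a) (app (app K_S a) s)
  | S₁_app {a s : Lam} : IsAtom a → U2Shape (.holds a) s → U2Shape (.holds a) (app (S₁ a) s)
  | delta_app {a s : Lam} : IsAtom a → U2Shape (.holds a) s → U2Shape (.holds a) (app K_delta s)
  | atom_app {a s : Lam} : IsAtom a → U2Shape (.holds a) s → U2Shape (.holds a) (app a s)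
  | lam_holdsUnder {a b : Lam} :
      IsAtom a → U2Shape (.holdsUnder (lift 0 a)) b → U2Shape (.holds a) (lam b)
  | app_var {a q : Lam} :
      IsAtom a → U2Shape (.holds a) q → U2Shape (.holdsUnder a) (app q (var 0))
  | atom_var_app {a s : Lam} :
      IsAtom a → U2Shape (.holdsUnder a) s → U2Shape (.holdsUnder a) (app (app a (var 0)) s)
  | var_app {a s : Lam} :
      IsAtom a → U2Shape (.holdsUnder a) s → U2Shape (.holdsUnder a) (app (var 0) s)

theorem U2Shape.lift {c : U2Kind} {t : Lam} (h : U2Shape c t) {d : Nat} (hd : c.depth ≤ d) :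
    U2Shape (c.map (Lam.lift d)) (Lam.lift d t) := by
  induction h generalizing d with
  | selfApp ho ho' =>
      simpa [Lam.lift, lift_eq_self_of_closed (closedAt_of_mem_omegaSSReducts _ ho),
        lift_eq_self_of_closed (closedAt_of_mem_omegaSSReducts _ ho')] using .selfApp ho ho'
  | ss_app hg _ ih =>
      simpa [Lam.lift, lift_eq_self_of_closed (closedAt_of_mem_ssReducts _ hg)]
        using (ih hd).ss_app hg
  | lam_holds _ ih => simpa [Lam.lift] using (ih (d := d + 1) (Nat.zero_le _)).lam_holds
  | engine_app _ ha ih => exact (ih (Nat.zero_le _)).engine_app (ha.lift d)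
  | S_app ha _ ih => simpa [Lam.lift] using U2Shape.S_app (ha.lift d) (ih hd)
  | S₁_app ha _ ih => simpa [Lam.lift, lift_S₁] using U2Shape.S₁_app (ha.lift d) (ih hd)
  | delta_app ha _ ih => simpa [Lam.lift] using U2Shape.delta_app (ha.lift d) (ih hd)
  | atom_app ha _ ih => exact U2Shape.atom_app (ha.lift d) (ih hd)
  | @lam_holdsUnder a b ha _ ih =>
      have hb := ih (d := d + 1) (by simp)
      rw [U2Kind.map, ← lift_lift a (Nat.zero_le d)] at hb
      exact U2Shape.lam_holdsUnder (ha.lift d) hb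
  | app_var ha _ ih =>
      simpa [Lam.lift, show 0 < d from hd] using
        U2Shape.app_var (ha.lift d) (ih (Nat.zero_le _))
  | atom_var_app ha _ ih =>
      simpa [Lam.lift, show 0 < d from hd] using U2Shape.atom_var_app (ha.lift d) (ih hd)
  | var_app ha _ ih =>
      simpa [Lam.lift, show 0 < d from hd] using U2Shape.var_app (ha.lift d) (ih hd)

theorem U2Shape.subst {c : U2Kind} {t : Lam} (h : U2Shape c t) {k : Nat} {b : Lam}
    (hb : IsAtom b) (hk : c.depth ≤ k ∨ b = var 0) :
    U2Shape (c.map (Lam.subst k b)) (Lam.subst k b t) := by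
  have hvar : ∀ {k b}, 1 ≤ k ∨ b = var 0 → Lam.subst k b (var 0) = var 0 := by
    rintro k b (hk | rfl)
    · simp [Lam.subst]; omega
    · simp [Lam.subst]
  induction h generalizing k b with
  | selfApp ho ho' =>
      simpa [Lam.subst, subst_eq_self_of_closed (closedAt_of_mem_omegaSSReducts _ ho),
        subst_eq_self_of_closed (closedAt_of_mem_omegaSSReducts _ ho')] using .selfApp ho ho'
  | ss_app hg _ ih =>
      simpa [Lam.subst, subst_eq_self_of_closed (closedAt_of_mem_ssReducts _ hg)]
        using (ih hb (by simp)).ss_app hg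
  | lam_holds _ ih =>
      simpa [Lam.subst, hvar] using (ih (k := k + 1) (hb.lift 0) (by simp)).lam_holds
  | engine_app _ ha ih => exact (ih hb (by simp)).engine_app (ha.subst hb k)
  | S_app ha _ ih => simpa [Lam.subst] using U2Shape.S_app (ha.subst hb k) (ih hb (by simp))
  | S₁_app ha _ ih =>
      simpa [Lam.subst, subst_S₁] using U2Shape.S₁_app (ha.subst hb k) (ih hb (by simp))
  | delta_app ha _ ih =>
      simpa [Lam.subst] using U2Shape.delta_app (ha.subst hb k) (ih hb (by simp))
  | atom_app ha _ ih => exact U2Shape.atom_app (ha.subst hb k) (ih hb (by simp))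
  | @lam_holdsUnder a t ha _ ih =>
      have ht := ih (k := k + 1) (hb.lift 0) (by simp)
      rw [U2Kind.map, ← lift_subst_of_le a (Nat.zero_le k)] at ht
      exact U2Shape.lam_holdsUnder (ha.subst hb k) ht
  | app_var ha _ ih =>
      have h' := U2Shape.app_var (ha.subst hb k) (ih hb (by simp))
      rwa [← hvar hk] at h'
  | atom_var_app ha _ ih =>
      have h' := U2Shape.atom_var_app (ha.subst hb k) (ih hb hk)
      rwa [← hvar hk] at h'
  | var_app ha _ ih =>
      have h' := U2Shape.var_app (ha.subst hb k) (ih hb hk)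
      rwa [← hvar hk] at h'

theorem U2Shape.selfApp_beta {b o' : Lam} (ho : lam b ∈ omegaSSReducts)
    (ho' : o' ∈ omegaSSReducts) : U2Shape .engine (Lam.subst 0 o' b) := by
  have hself := U2Shape.selfApp ho' ho'
  have hlift : Lam.lift 0 o' = o' := lift_eq_self_of_closed (closedAt_of_mem_omegaSSReducts _ ho') 0
  simp only [omegaSSReducts, List.mem_append, List.mem_map, List.mem_cons,
    List.not_mem_nil, or_false] at ho
  rcases ho with ⟨g, hg, hgb⟩ | hb | hb | hb
  · cases hgb
    simpa [Lam.subst, subst_eq_self_of_closed (closedAt_of_mem_ssReducts _ hg)]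
      using hself.ss_app hg
  · cases hb
    simpa [Lam.subst, hlift] using
      (U2Shape.S_app (isAtom_var 0) (hself.engine_app (isAtom_var 0))).lam_holds
  · cases hb
    simpa [Lam.subst, subst_S₁, hlift] using
      (U2Shape.S₁_app (isAtom_var 0) (hself.engine_app (isAtom_var 0))).lam_holds
  · cases hb
    simpa [Lam.subst, Lam.lift, hlift] using
      (U2Shape.lam_holdsUnder (isAtom_var 0) (U2Shape.atom_var_app (isAtom_var 1)
        (U2Shape.app_var (isAtom_var 1) (hself.engine_app (isAtom_var 1))))).lam_holds

theorem U2Shape.ss_app_beta {b X : Lam} (hg : lam b ∈ ssReducts) (hX : U2Shape .engine X) :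
    U2Shape .engine (Lam.subst 0 X b) := by
  have hX₁ := hX.lift (d := 0) le_rfl
  have hX₂ := hX₁.lift (d := 0) le_rfl
  simp only [U2Kind.map] at hX₁ hX₂
  simp only [ssReducts, List.mem_cons, List.not_mem_nil, or_false] at hg
  rcases hg with hb | hb | hb | hb <;> cases hb
  · simpa [Lam.subst] using
      (U2Shape.S_app (isAtom_var 0) (hX₁.engine_app (isAtom_var 0))).lam_holds
  · simpa [Lam.subst, subst_S₁] using
      (U2Shape.S₁_app (isAtom_var 0) (hX₁.engine_app (isAtom_var 0))).lam_holds
  · simpa [Lam.subst, Lam.lift] using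
      (U2Shape.lam_holdsUnder (isAtom_var 0) (U2Shape.atom_var_app (isAtom_var 1)
        (U2Shape.app_var (isAtom_var 1) (hX₂.engine_app (isAtom_var 1))))).lam_holds

theorem U2Shape.beta {c : U2Kind} {b t : Lam} (h : U2Shape c (app (lam b) t)) :
    U2Shape c (Lam.subst 0 t b) := by
  cases h with
  | selfApp ho ho' => exact selfApp_beta ho ho'
  | ss_app hg hX => exact ss_app_beta hg hX
  | engine_app hX ha => cases hX with
    | lam_holds hb => simpa [Lam.subst] using hb.subst (k := 0) ha (by simp)
  | @S₁_app a _ ha hs =>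
      simpa [S₁, Lam.subst, Lam.lift, lift_lift a le_rfl, subst_lift] using
        U2Shape.lam_holdsUnder ha (U2Shape.atom_var_app (ha.lift 0)
          (U2Shape.app_var (ha.lift 0) (hs.lift (d := 0) le_rfl)))
  | delta_app ha hs =>
      simpa [K_delta, Lam.subst] using
        U2Shape.lam_holdsUnder ha (U2Shape.var_app (ha.lift 0)
          (U2Shape.app_var (ha.lift 0) (hs.lift (d := 0) le_rfl)))
  | atom_app ha hs =>
      obtain rfl : b = var 0 := by rcases ha with h | ⟨n, h⟩ <;> simp_all [K_I]
      simpa [Lam.subst] using hs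
  | app_var ha hq => cases hq with
    | lam_holdsUnder ha' hb =>
        simpa [subst_lift] using hb.subst (k := 0) (isAtom_var 0) (.inr rfl)

theorem U2Shape.app_left {c : U2Kind} {s s' t : Lam} (h : U2Shape c (app s t)) (hs : Step s s')
    (ih : ∀ {c}, U2Shape c s → U2Shape c s') : U2Shape c (app s' t) := by
  cases h with
  | selfApp ho ho' => exact .selfApp (omegaSSReducts_isReductClosed.mem_of_step ho hs) ho'
  | ss_app hg hX => exact .ss_app (ssReducts_isReductClosed.mem_of_step hg hs) hX
  | engine_app hX ha => exact (ih hX).engine_app ha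
  | S_app ha ht => exact ha.eq_of_step_S_app hs ▸ .S₁_app ha ht
  | S₁_app ha ht => exact ha.eq_of_step_S₁ hs ▸ .delta_app ha ht
  | delta_app _ _ => exact absurd hs.reducts_ne_nil (by decide)
  | atom_app ha _ => exact absurd hs ha.not_step
  | app_var ha hq => exact (ih hq).app_var ha
  | atom_var_app ha ht => exact ha.eq_of_step_app_var hs ▸ .var_app ha ht
  | var_app _ _ => cases hs

theorem U2Shape.app_right {c : U2Kind} {s t t' : Lam} (h : U2Shape c (app s t)) (ht : Step t t')
    (ih : ∀ {c}, U2Shape c t → U2Shape c t') : U2Shape c (app s t') := by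
  cases h with
  | selfApp ho ho' => exact .selfApp ho (omegaSSReducts_isReductClosed.mem_of_step ho' ht)
  | ss_app hg hX => exact .ss_app hg (ih hX)
  | engine_app _ ha => exact absurd ht ha.not_step
  | S_app ha hs => exact .S_app ha (ih hs)
  | S₁_app ha hs => exact .S₁_app ha (ih hs)
  | delta_app ha hs => exact .delta_app ha (ih hs)
  | atom_app ha hs => exact .atom_app ha (ih hs)
  | app_var _ _ => cases ht
  | atom_var_app ha hs => exact .atom_var_app ha (ih hs)
  | var_app ha hs => exact .var_app ha (ih hs)

theorem U2Shape.step {c : U2Kind} {t u : Lam} (h : U2Shape c t) (hs : Step t u) : U2Shape c u := by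
  induction hs generalizing c with
  | beta => exact h.beta
  | appL _ hs ih => exact h.app_left hs ih
  | appR _ ht ih => exact h.app_right ht ih
  | lam _ ih => cases h with
    | lam_holds hb => exact (ih hb).lam_holds
    | lam_holdsUnder ha hb => exact (ih hb).lam_holdsUnder ha

theorem U2Shape.containsI {c : U2Kind} {t : Lam} (h : U2Shape c t)
    (hc : c = .holds K_I ∨ c = .holdsUnder K_I) : containsI t := by
  induction h <;> simp_all [Lam.containsI, K_I, Lam.lift]

theorem red_Y2 : Red (app (app Y0 K_delta) K_delta) (app (app omegaDelta omegaDelta) K_delta) :=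
  .single (.appL _ (.beta _ _))

theorem red_U2 : Red (app (app (app (app K_B Y0) K_S) K_S) K_I) (app (app omegaSS omegaSS) K_I) :=
  .head (.appL _ (.appL _ (.appL _ (.beta _ _)))) <|
  .head (.appL _ (.appL _ (.beta _ _))) <|
  .head (.appL _ (.beta _ _)) <|
  .single (.appL _ (.beta _ _))

/-- `Y0 δ δ` and `B Y0 S S I` are not β-convertible. -/
theorem Y2_not_conv_U2 :
    ¬ Conv (app (app Y0 K_delta) K_delta)
           (app (app (app (app K_B Y0) K_S) K_S) K_I) := by
  intro h
  obtain ⟨c, hY2, hU2⟩ := Conv.exists_common_reduct <|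
    .trans _ _ _ (.symm _ _ red_Y2.conv) (.trans _ _ _ h red_U2.conv)
  have hY2c : Y2Shape 0 c := hY2.preserves Y2Shape.step <|
    .app_delta (.selfApp (by decide) (by decide))
  have hU2c : U2Shape (.holds K_I) c := hU2.preserves U2Shape.step <|
    .engine_app (.selfApp (by decide) (by decide)) (.inl rfl)
  simpa [hY2c.containsI_eq_false] using hU2c.containsI (.inl rfl)

end Lam
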